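/- Let X be a normal projective variety over ℂ with finitely generated and free divisor class group Cl(X), and let {f_i : i ∈ I} be a set of homogeneous generators of the Cox ring R(X). Then the effective cone Eff(X) ⊆ Cl(X)_ℚ equals the cone generated by the degrees deg(f_i), i ∈ I. In particular, the effective cone of a Mori dream space is polyhedral. -/

import Mathlib

/-!
Since the `f i` generate `R(X)`, every component of every element of `R(X)` has degree in the
additive monoid generated by the degrees of the nonzero `f i`. The effective classes are exactly
the degrees of the nonzero graded pieces, so they lie between the degrees of the `f i` and the
monoid these generate, and all three sets span the same cone. If `R(X)` is of finite type, the
homogeneous components of finitely many generators again generate, and have finitely many degrees.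
-/

noncomputable section

/-- The convex cone in `ℚ^n` generated by a set of vectors. -/
def coneGen {n : ℕ} (S : Set (Fin n → ℚ)) : Set (Fin n → ℚ) :=
  { x | ∃ (m : ℕ) (c : Fin m → ℚ) (v : Fin m → (Fin n → ℚ)),
      (∀ i, 0 ≤ c i ∧ v i ∈ S) ∧ x = ∑ i, c i • v i }

/-- The canonical embedding `ℤ^n → ℚ^n`. -/
def toQ {n : ℕ} (v : Fin n → ℤ) : Fin n → ℚ := fun i => (v i : ℚ)

/-- `H` is the Hilbert basis of the monoid of lattice points of the cone `C ⊆ ℚ^n`: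
it consists of lattice points of `C`, every lattice point of `C` is a nonnegative
integral combination of elements of `H`, and `H` is minimal with this property. -/
def IsHilbertBasis {n : ℕ} (C : Set (Fin n → ℚ)) (H : Set (Fin n → ℤ)) : Prop :=
  (∀ v ∈ H, toQ v ∈ C) ∧
  (∀ v : Fin n → ℤ, toQ v ∈ C →
    ∃ (m : ℕ) (c : Fin m → ℕ) (w : Fin m → (Fin n → ℤ)),
      (∀ i, w i ∈ H) ∧ v = ∑ i, c i • w i) ∧
  (∀ H' : Set (Fin n → ℤ), H' ⊆ H →
    (∀ v : Fin n → ℤ, toQ v ∈ C →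
      ∃ (m : ℕ) (c : Fin m → ℕ) (w : Fin m → (Fin n → ℤ)),
        (∀ i, w i ∈ H') ∧ v = ∑ i, c i • w i) → H' = H)

/-- An abstract model of a normal projective variety `X` over `ℂ` whose divisor class
group is finitely generated and free (of rank `n`, identified with `ℤⁿ = Fin n → ℤ`),
together with its Cox ring `R(X) = ⊕_{[D] ∈ Cl(X)} H⁰(X, O_X(D))` and its
`Cl(X)`-grading, in which the graded piece of degree `[D]` is `H⁰(X, O_X(D))`. -/
structure NPVariety (n : ℕ) where
  /-- the group of Weil divisors of `X` -/
  Div : Type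
  [instDiv : AddCommGroup Div]
  /-- the class map onto the divisor class group `Cl(X) ≅ ℤⁿ` -/
  cls : Div →+ (Fin n → ℤ)
  cls_surjective : Function.Surjective cls
  /-- effective divisors -/
  IsEffective : Div → Prop
  /-- the Cox ring `R(X)` -/
  R : Type
  [instRing : CommRing R]
  [instAlg : Algebra ℂ R]
  /-- the `Cl(X)`-grading on `R(X)`: the piece of degree `[D]` is `H⁰(X, O_X(D))` -/
  gr : (Fin n → ℤ) → Submodule ℂ R
  [instGraded : GradedAlgebra gr]
  /-- a graded piece is nonzero exactly when its degree is the class of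
  an effective divisor -/
  gr_ne_bot_iff : ∀ d, gr d ≠ ⊥ ↔ ∃ D, IsEffective D ∧ cls D = d

attribute [instance] NPVariety.instDiv NPVariety.instRing NPVariety.instAlg
  NPVariety.instGraded

namespace NPVariety

variable {n : ℕ} (X : NPVariety n)

/-- an element of the Cox ring is homogeneous if it lies in some graded piece -/
def IsHomogeneousElem (f : X.R) : Prop := ∃ d, f ∈ X.gr d

/-- a set of homogeneous generators of the Cox ring -/
def IsGenSet (S : Set X.R) : Prop :=
  (∀ f ∈ S, X.IsHomogeneousElem f) ∧ Algebra.adjoin ℂ S = ⊤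

/-- a minimal set of homogeneous generators: no element is a polynomial in the others -/
def IsMinGenSet (S : Set X.R) : Prop :=
  X.IsGenSet S ∧ ∀ f ∈ S, f ∉ Algebra.adjoin ℂ (S \ {f})

/-- `R(X)` has a generator in degree `w` if every minimal set of homogeneous generators
contains a nontrivial element of degree `w` -/
def HasGeneratorInDegree (w : Fin n → ℤ) : Prop :=
  ∀ S : Set X.R, X.IsMinGenSet S → ∃ f ∈ S, f ≠ 0 ∧ f ∈ X.gr w

/-- the effective cone `Eff(X) ⊆ Cl(X)_ℚ`: the cone generated by classes of
effective divisors -/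
def effConeQ : Set (Fin n → ℚ) :=
  coneGen (toQ '' { d | ∃ D, X.IsEffective D ∧ X.cls D = d })

end NPVariety

namespace DirectSum

variable {ι M σ : Type*} [DecidableEq ι] [AddCommMonoid M] [SetLike σ M]
  [AddSubmonoidClass σ M] (ℳ : ι → σ) [Decomposition ℳ]

def degreeSet {I : Type*} (f : I → M) : Set ι := {d | ∃ i, f i ≠ 0 ∧ f i ∈ ℳ d}

theorem eq_of_mem_of_decompose_ne_zero {a : M} {d e : ι} (ha : a ∈ ℳ e)
    (hd : decompose ℳ a d ≠ 0) : d = e := by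
  by_contra hde
  exact hd (Subtype.ext (decompose_of_mem_ne ℳ ha (Ne.symm hde)))

theorem degreeSet_finite {I : Type*} [Finite I] (f : I → M) : (degreeSet ℳ f).Finite := by
  have hunion : degreeSet ℳ f = ⋃ i, {d | f i ≠ 0 ∧ f i ∈ ℳ d} := by
    ext
    simp [degreeSet]
  rw [hunion]
  refine Set.finite_iUnion fun i => Set.Subsingleton.finite ?_
  rintro d ⟨h0, hd⟩ e ⟨-, he⟩
  exact degree_eq_of_mem_mem ℳ hd he h0

end DirectSum

namespace GradedAlgebra

open DirectSum

variable {K A ι : Type*} [CommSemiring K] [Semiring A] [Algebra K A] [DecidableEq ι]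
  [AddCommMonoid ι] (𝒜 : ι → Submodule K A) [GradedAlgebra 𝒜]

/-- The components of a product sit in sums of degrees of components of the factors. -/
theorem mem_closure_degreeSet_of_decompose_ne_zero {I : Type*} {f : I → A}
    (hhom : ∀ i, SetLike.IsHomogeneousElem 𝒜 (f i)) {x : A}
    (hx : x ∈ Algebra.adjoin K (Set.range f)) {d : ι}
    (hd : decompose 𝒜 x d ≠ 0) :
    d ∈ AddSubmonoid.closure (degreeSet 𝒜 f) := by
  classical
  induction hx using Algebra.adjoin_induction generalizing d with
  | mem _ hx =>
    obtain ⟨i, rfl⟩ := hx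
    obtain ⟨e, he⟩ := hhom i
    obtain rfl := eq_of_mem_of_decompose_ne_zero 𝒜 he hd
    refine AddSubmonoid.subset_closure ⟨i, fun h0 => hd ?_, he⟩
    simp [h0]
  | algebraMap r =>
    obtain rfl := eq_of_mem_of_decompose_ne_zero 𝒜 (SetLike.algebraMap_mem_graded 𝒜 r) hd
    exact zero_mem _
  | add x y _ _ hx hy =>
    rw [decompose_add, DirectSum.add_apply] at hd
    by_cases hxd : decompose 𝒜 x d = 0
    · exact hy (by simpa [hxd] using hd)
    · exact hx hxd
  | mul x y _ _ hx hy =>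
    have hd' : (decompose 𝒜 (x * y) d : A) ≠ 0 := fun h => hd (Subtype.ext h)
    rw [decompose_mul, coe_mul_apply] at hd'
    obtain ⟨⟨i, j⟩, hij, -⟩ := Finset.exists_ne_zero_of_sum_ne_zero hd'
    simp only [Finset.mem_filter, Finset.mem_product, DFinsupp.mem_support_iff] at hij
    obtain ⟨⟨hi, hj⟩, rfl⟩ := hij
    exact add_mem (hx hi) (hy hj)

theorem mem_closure_degreeSet_of_ne_bot {I : Type*} {f : I → A}
    (hhom : ∀ i, SetLike.IsHomogeneousElem 𝒜 (f i))
    (hgen : Algebra.adjoin K (Set.range f) = ⊤) {d : ι} (hd : 𝒜 d ≠ ⊥) :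
    d ∈ AddSubmonoid.closure (degreeSet 𝒜 f) := by
  obtain ⟨x, hx, hx0⟩ := (Submodule.ne_bot_iff _).1 hd
  refine mem_closure_degreeSet_of_decompose_ne_zero 𝒜 hhom (hgen ▸ Algebra.mem_top) (x := x) ?_
  rwa [decompose_of_mem 𝒜 hx, of_eq_same, ne_eq, Subtype.ext_iff]

theorem exists_finset_isHomogeneousElem_adjoin_eq_top [Algebra.FiniteType K A] :
    ∃ s : Finset A, (∀ a ∈ s, SetLike.IsHomogeneousElem 𝒜 a) ∧
      Algebra.adjoin K (s : Set A) = ⊤ := by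
  classical
  obtain ⟨F, hF⟩ := Algebra.FiniteType.out (R := K) (A := A)
  refine ⟨F.biUnion fun x => (decompose 𝒜 x).support.image
    fun d => (decompose 𝒜 x d : A), ?_, ?_⟩
  · simp only [Finset.mem_biUnion, Finset.mem_image]
    rintro _ ⟨x, -, d, -, rfl⟩
    exact ⟨d, (decompose 𝒜 x d).2⟩
  · rw [← top_le_iff, ← hF, Algebra.adjoin_le_iff]
    intro x hx
    rw [← sum_support_decompose 𝒜 x]
    refine sum_mem fun d hd => Algebra.subset_adjoin ?_
    simp only [Finset.coe_biUnion, Finset.coe_image, Set.mem_iUnion]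
    exact ⟨x, hx, Set.mem_image_of_mem _ hd⟩

end GradedAlgebra

theorem coneGen_eq_hull {n : ℕ} (S : Set (Fin n → ℚ)) :
    coneGen S = PointedCone.hull ℚ S := by
  ext x
  rw [SetLike.mem_coe, Submodule.mem_span_set']
  constructor
  · rintro ⟨m, c, v, h, rfl⟩
    exact ⟨m, fun i => ⟨c i, (h i).1⟩, fun i => ⟨v i, (h i).2⟩, rfl⟩
  · rintro ⟨m, c, v, rfl⟩
    exact ⟨m, fun i => c i, fun i => v i, fun i => ⟨(c i).2, (v i).2⟩, rfl⟩

theorem hull_toQ_image_closure {n : ℕ} (T : Set (Fin n → ℤ)) :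
    PointedCone.hull ℚ (toQ '' (AddSubmonoid.closure T : Set (Fin n → ℤ))) =
      PointedCone.hull ℚ (toQ '' T) := by
  have himage : toQ '' (AddSubmonoid.closure T : Set (Fin n → ℤ)) =
      AddSubmonoid.closure (toQ '' T) :=
    congrArg SetLike.coe (AddMonoidHom.map_mclosure ((Int.castAddHom ℚ).compLeft (Fin n)) T)
  rw [himage]
  exact Submodule.span_closure

namespace NPVariety

variable {n : ℕ} (X : NPVariety n)

theorem setOf_isEffective_cls_eq :
    {d | ∃ D, X.IsEffective D ∧ X.cls D = d} = {d | X.gr d ≠ ⊥} :=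
  Set.ext fun d => (X.gr_ne_bot_iff d).symm

theorem effConeQ_eq_coneGen_degreeSet {I : Type*} {f : I → X.R}
    (hhom : ∀ i, X.IsHomogeneousElem (f i)) (hgen : Algebra.adjoin ℂ (Set.range f) = ⊤) :
    X.effConeQ = coneGen (toQ '' DirectSum.degreeSet X.gr f) := by
  rw [effConeQ, coneGen_eq_hull, coneGen_eq_hull, setOf_isEffective_cls_eq]
  apply le_antisymm
  · refine le_trans ?_ (hull_toQ_image_closure _).le
    exact Submodule.span_mono <| Set.image_mono fun d hd =>
      GradedAlgebra.mem_closure_degreeSet_of_ne_bot X.gr hhom hgen hd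
  · refine Submodule.span_mono <| Set.image_mono ?_
    rintro d ⟨i, hi0, hi⟩
    exact (Submodule.ne_bot_iff _).2 ⟨f i, hi, hi0⟩

end NPVariety

/-- Proposition 2.1 of Artebani–Hausen–Laface.
Let `X` be a normal projective variety over `ℂ` with finitely generated free divisor
class group, and let `f i`, `i ∈ I`, be a set of homogeneous generators of the Cox ring
`R(X)`. Then `Eff(X) = cone(deg (f i) : i ∈ I)` in `Cl(X)_ℚ`. In particular, if `X` is
a Mori dream space (i.e. `R(X)` is finitely generated), the effective cone of `X`
is polyhedral. -/
theorem effectiveCone_eq_cone_of_degrees_of_generators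
    {n : ℕ} (X : NPVariety n) {I : Type} (f : I → X.R)
    (hhom : ∀ i, X.IsHomogeneousElem (f i))
    (hgen : Algebra.adjoin ℂ (Set.range f) = ⊤) :
    X.effConeQ = coneGen (toQ '' { d | ∃ i, f i ≠ 0 ∧ f i ∈ X.gr d }) ∧
    (Algebra.FiniteType ℂ X.R →
      ∃ G : Finset (Fin n → ℤ),
        X.effConeQ = coneGen (toQ '' (G : Set (Fin n → ℤ)))) := by
  refine ⟨X.effConeQ_eq_coneGen_degreeSet hhom hgen, fun _ => ?_⟩
  obtain ⟨s, hhom_s, hgen_s⟩ := GradedAlgebra.exists_finset_isHomogeneousElem_adjoin_eq_top X.gr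
  have hgen_s' : Algebra.adjoin ℂ (Set.range ((↑) : s → X.R)) = ⊤ := by
    rwa [Subtype.range_coe]
  refine ⟨(DirectSum.degreeSet_finite X.gr ((↑) : s → X.R)).toFinset, ?_⟩
  rw [Set.Finite.coe_toFinset]
  exact X.effConeQ_eq_coneGen_degreeSet (fun i => hhom_s i i.2) hgen_s'
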